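/- Let C be a small category and let Q : C ⥤ Q_C be the coequalizer in Cat of the pair of functors d0, d1 : ∐_{σ} 1 ⇉ C, where the coproduct of copies of the terminal category 1 is indexed by the set of all isomorphisms σ of C, and d0 (respectively d1) sends the object of the σ-indexed copy of 1 to the domain (respectively codomain) of σ. Let i : Core(C) ⥤ C denote the inclusion of the core of C. Then for every small category X and every functor G : X ⥤ C such that Q ∘ G is trivial (i.e., Q maps every morphism G(x) to an automorphism of Q_C), there exists a unique functor G' : X ⥤ Core(C) with i ∘ G' = G. -/

import Mathlib

open CategoryTheory Limits

universe u

/-- A functor is trivial if it maps every morphism to an automorphism: the images of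
domain and codomain are equal and the image of the morphism is an isomorphism. -/
def IsTrivialFunctor {X : Type*} {Y : Type*} [Category X] [Category Y] (F : X ⥤ Y) :
    Prop :=
  ∀ (a b : X) (f : a ⟶ b), F.obj a = F.obj b ∧ IsIso (F.map f)

/-- The set of isomorphisms of `C`, used to index a copower of the terminal category:
this coproduct of copies of the terminal category `1` is the discrete category on the
set of isomorphisms of `C`. -/
def IsoIndex (C : Type u) [Category.{u} C] : Type u := Σ X Y : C, X ≅ Y

/-- The functor `d0` sending the object of the copy of `1` indexed by an isomorphism
`σ` of `C` to the domain of `σ`. -/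
def isoDom (C : Type u) [Category.{u} C] :
    Cat.of (Discrete (IsoIndex C)) ⟶ Cat.of C :=
  (Discrete.functor fun (σ : IsoIndex C) => σ.1).toCatHom

/-- The functor `d1` sending the object of the copy of `1` indexed by an isomorphism
`σ` of `C` to the codomain of `σ`. -/
def isoCod (C : Type u) [Category.{u} C] :
    Cat.of (Discrete (IsoIndex C)) ⟶ Cat.of C :=
  (Discrete.functor fun (σ : IsoIndex C) => σ.2.1).toCatHom

/-!
In the coequalizer `Q : C ⥤ Q_C` of `d0, d1` any two isomorphic objects become equal, so the
quotient functor `C ⥤ Skeleton C` factors through `Q`. That functor is an equivalence, hence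
reflects isomorphisms, and therefore so does `Q`. A functor `G` with `Q ∘ G` trivial thus
sends every morphism to an isomorphism, and such functors factor uniquely through the core,
since `Core C ⥤ C` is faithful and injective on objects.
-/

namespace CategoryTheory.Core

variable {X C : Type*} [Category X] [Category C]

noncomputable def liftOfIsIso (G : X ⥤ C) (hG : ∀ {a b : X} (f : a ⟶ b), IsIso (G.map f)) :
    X ⥤ Core C where
  obj x := ⟨G.obj x⟩
  map f := ⟨@asIso _ _ _ _ _ (hG f)⟩

theorem liftOfIsIso_comp_inclusion (G : X ⥤ C)
    (hG : ∀ {a b : X} (f : a ⟶ b), IsIso (G.map f)) :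
    liftOfIsIso G hG ⋙ inclusion C = G :=
  rfl

theorem eqToHom_iso_hom {x y : Core C} (p : x = y) :
    (eqToHom p).iso.hom = eqToHom (congrArg Core.of p) := by
  cases p; rfl

theorem eq_of_comp_inclusion_eq {F₁ F₂ : X ⥤ Core C}
    (h : F₁ ⋙ inclusion C = F₂ ⋙ inclusion C) : F₁ = F₂ := by
  refine Functor.ext (fun x => congrArg Core.mk (Functor.congr_obj h x)) (fun x y f => ?_)
  ext
  simp only [coreCategory_comp_iso, Iso.trans_hom, eqToHom_iso_hom]
  exact Functor.congr_hom h f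

theorem existsUnique_comp_inclusion_eq (G : X ⥤ C)
    (hG : ∀ {a b : X} (f : a ⟶ b), IsIso (G.map f)) :
    ∃! G' : X ⥤ Core C, G' ⋙ inclusion C = G :=
  ⟨liftOfIsIso G hG, liftOfIsIso_comp_inclusion G hG, fun _ h =>
    eq_of_comp_inclusion_eq (h.trans (liftOfIsIso_comp_inclusion G hG).symm)⟩

end CategoryTheory.Core

section

variable {C : Type u} [Category.{u} C]

theorem isoDom_comp_eq_isoCod_comp {D : Type u} [Category.{u} D] (F : C ⥤ D)
    (hF : ∀ {a b : C}, (a ≅ b) → F.obj a = F.obj b) :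
    isoDom C ≫ F.toCatHom = isoCod C ≫ F.toCatHom :=
  Cat.ext (Discrete.functor_ext fun σ => hF σ.2.2)

theorem reflectsIsomorphisms_π_of_isColimit {c : Cofork (isoDom C) (isoCod C)}
    (hc : IsColimit c) : c.π.toFunctor.ReflectsIsomorphisms := by
  let S : c.pt ⟶ Cat.of (Skeleton C) := Cofork.IsColimit.desc hc (toSkeletonFunctor C).toCatHom
    (isoDom_comp_eq_isoCod_comp _ fun e => toSkeleton_eq_toSkeleton_iff.2 ⟨e⟩)
  have hS : c.π.toFunctor ⋙ S.toFunctor = toSkeletonFunctor C :=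
    congrArg Cat.Hom.toFunctor (Cofork.IsColimit.π_desc hc)
  have : (c.π.toFunctor ⋙ S.toFunctor).ReflectsIsomorphisms :=
    hS ▸ inferInstanceAs (skeletonEquivalence C).inverse.ReflectsIsomorphisms
  exact reflectsIsomorphisms_of_comp _ S.toFunctor

end

/-- Let `Q = c.π : C ⥤ Q_C` be the coequalizer in `Cat` of `d0, d1 : ∐_σ 1 ⇉ C`.
Every functor `G : X ⥤ C` whose composite with `Q` is trivial factors uniquely through
the inclusion of the core of `C`.  (This is the `Z`-kernel property of the core.) -/
theorem core_zKernel_of_coequalizer (C : Type u) [Category.{u} C]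
    (c : Cofork (isoDom C) (isoCod C)) (hc : IsColimit c)
    (X : Type u) [Category.{u} X] (G : X ⥤ C)
    (hG : IsTrivialFunctor (G ⋙ (c.π.toFunctor : C ⥤ c.pt))) :
    ∃! G' : X ⥤ Core C, G' ⋙ Core.inclusion C = G := by
  refine Core.existsUnique_comp_inclusion_eq G fun f => ?_
  have : IsIso (c.π.toFunctor.map (G.map f)) := (hG _ _ f).2
  exact (reflectsIsomorphisms_π_of_isColimit hc).reflects (G.map f)
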